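/- The set D(A) = {f ∈ L²(ℝ) : (x ↦ x f(x)) ∈ L²(ℝ) and lim_{R→∞} ∫_{−R}^{R} f(x) dx exists and equals 0} is a dense linear subspace of L²(ℝ). -/

import Mathlib

/-! Closure under the linear operations is immediate, both defining conditions being linear.
For density, approximate `f` by a continuous compactly supported `g`. Subtracting from `g` the
mass `∫ g` spread evenly over `(0, L]` makes the integral vanish while keeping `x g(x)` square
integrable, at an `L²` cost of only `‖∫ g‖ / √L`, which tends to `0` as `L → ∞`. -/

open MeasureTheory Filter

/-- The domain `D(A)` of the Friedrichs-model minimal operator: square integrable `f`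
with `x f(x)` square integrable and `lim_{R→∞} ∫_{-R}^R f = 0`. -/
def FriedrichsDomA : Set (Lp ℂ 2 (volume : Measure ℝ)) :=
  {f | MemLp (fun x : ℝ => (x : ℂ) * f x) 2 (volume : Measure ℝ) ∧
      Tendsto (fun R : ℝ => ∫ x in (-R)..R, f x) atTop (nhds 0)}

open scoped Topology ENNReal

lemma MeasureTheory.Lp.intervalIntegrable {E : Type*} [NormedAddCommGroup E] {p : ℝ≥0∞}
    (hp : 1 ≤ p) (f : Lp E p (volume : Measure ℝ)) (a b : ℝ) :
    IntervalIntegrable f volume a b :=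
  (((Lp.memLp f).locallyIntegrable hp).integrableOn_isCompact isCompact_uIcc).intervalIntegrable

lemma mem_friedrichsDomA_of_ae_eq {f : Lp ℂ 2 (volume : Measure ℝ)} {g : ℝ → ℂ}
    (hfg : f =ᵐ[volume] g) (hxg : MemLp (fun x : ℝ => (x : ℂ) * g x) 2 volume)
    (hg : Tendsto (fun R : ℝ => ∫ x in (-R)..R, g x) atTop (𝓝 0)) : f ∈ FriedrichsDomA := by
  refine ⟨hxg.ae_eq ?_, hg.congr fun R => ?_⟩
  · filter_upwards [hfg] with x hx
    rw [hx]
  · exact intervalIntegral.integral_congr_ae (hfg.mono fun x hx _ => hx.symm)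

lemma zero_mem_friedrichsDomA : (0 : Lp ℂ 2 (volume : Measure ℝ)) ∈ FriedrichsDomA :=
  mem_friedrichsDomA_of_ae_eq (Lp.coeFn_zero ℂ 2 volume) (by simp) (by simp)

lemma add_mem_friedrichsDomA {f g : Lp ℂ 2 (volume : Measure ℝ)} (hf : f ∈ FriedrichsDomA)
    (hg : g ∈ FriedrichsDomA) : f + g ∈ FriedrichsDomA := by
  refine mem_friedrichsDomA_of_ae_eq (Lp.coeFn_add f g)
    (by simpa only [Pi.add_def, mul_add] using hf.1.add hg.1) ?_
  simpa only [add_zero, Pi.add_apply] using (hf.2.add hg.2).congr fun R =>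
    (intervalIntegral.integral_add (Lp.intervalIntegrable one_le_two f _ _)
      (Lp.intervalIntegrable one_le_two g _ _)).symm

lemma smul_mem_friedrichsDomA (c : ℂ) {f : Lp ℂ 2 (volume : Measure ℝ)}
    (hf : f ∈ FriedrichsDomA) : c • f ∈ FriedrichsDomA := by
  refine mem_friedrichsDomA_of_ae_eq (Lp.coeFn_smul c f)
    (by simpa only [Pi.smul_def, smul_eq_mul, mul_left_comm] using hf.1.const_smul c) ?_
  simpa only [smul_zero, Pi.smul_apply] using (hf.2.const_smul c).congr fun R =>
    (intervalIntegral.integral_smul c _).symm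

lemma memLp_ofReal_mul_indicator_Ioc {p : ℝ≥0∞} (a : ℂ) (L : ℝ) :
    MemLp (fun x : ℝ => (x : ℂ) * (Set.Ioc 0 L).indicator (fun _ => a) x) p volume := by
  have h_ind := memLp_indicator_const (s := Set.Ioc 0 L) (μ := volume) p measurableSet_Ioc a
    (Or.inr measure_Ioc_lt_top.ne)
  refine h_ind.of_le_mul (c := L) (Complex.continuous_ofReal.aestronglyMeasurable.mul
      (aestronglyMeasurable_const.indicator measurableSet_Ioc)) (ae_of_all _ fun x => ?_)
  by_cases hx : x ∈ Set.Ioc 0 L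
  · rw [norm_mul, Complex.norm_real, Real.norm_of_nonneg hx.1.le]
    exact mul_le_mul_of_nonneg_right hx.2 (norm_nonneg _)
  · simp [hx]

lemma integral_indicator_Ioc_div (c : ℂ) {L : ℝ} (hL : 0 < L) :
    ∫ x, (Set.Ioc 0 L).indicator (fun _ => c / L) x = c := by
  rw [integral_indicator_const _ measurableSet_Ioc, Real.volume_real_Ioc_of_le hL.le, sub_zero,
    Complex.real_smul, mul_div_cancel₀ _ (Complex.ofReal_ne_zero.2 hL.ne')]

noncomputable def spreadMass (c : ℂ) (L : ℝ) : Lp ℂ 2 (volume : Measure ℝ) :=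
  indicatorConstLp (s := Set.Ioc 0 L) 2 measurableSet_Ioc measure_Ioc_lt_top.ne (c / L)

lemma norm_spreadMass (c : ℂ) {L : ℝ} (hL : 0 < L) : ‖spreadMass c L‖ = ‖c‖ / √L := by
  rw [spreadMass, norm_indicatorConstLp two_ne_zero ENNReal.ofNat_ne_top,
    Real.volume_real_Ioc_of_le hL.le, sub_zero, norm_div, Complex.norm_real,
    Real.norm_of_nonneg hL.le, ENNReal.toReal_ofNat,
    ← Real.sqrt_eq_rpow, div_mul_eq_mul_div, div_eq_div_iff hL.ne' (Real.sqrt_pos.2 hL).ne',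
    mul_assoc, Real.mul_self_sqrt hL.le]

lemma coeFn_spreadMass (c : ℂ) (L : ℝ) :
    spreadMass c L =ᵐ[volume] (Set.Ioc 0 L).indicator fun _ => c / L :=
  indicatorConstLp_coeFn

lemma tendsto_spreadMass (c : ℂ) : Tendsto (spreadMass c) atTop (𝓝 0) := by
  rw [tendsto_zero_iff_norm_tendsto_zero]
  refine ((tendsto_const_nhds (x := ‖c‖)).div_atTop Real.tendsto_sqrt_atTop).congr' ?_
  filter_upwards [eventually_gt_atTop 0] with L hL
  rw [norm_spreadMass c hL]

lemma toLp_sub_spreadMass_mem_friedrichsDomA {g : ℝ → ℂ} (hg : MemLp g 2 volume)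
    (hg_int : Integrable g) (hxg : MemLp (fun x : ℝ => (x : ℂ) * g x) 2 volume) {L : ℝ}
    (hL : 0 < L) : hg.toLp g - spreadMass (∫ x, g x) L ∈ FriedrichsDomA := by
  set bump := (Set.Ioc 0 L).indicator fun _ => (∫ x, g x) / L
  have hbump : Integrable bump := (integrableOn_const measure_Ioc_lt_top.ne).integrable_indicator
    measurableSet_Ioc
  refine mem_friedrichsDomA_of_ae_eq (g := g - bump) ?_
    (by simpa only [Pi.sub_def, mul_sub] using hxg.sub (memLp_ofReal_mul_indicator_Ioc _ L)) ?_
  · filter_upwards [Lp.coeFn_sub (hg.toLp g) (spreadMass (∫ x, g x) L), hg.coeFn_toLp,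
      coeFn_spreadMass (∫ x, g x) L] with x h_sub h_g h_bump
    rw [h_sub, Pi.sub_apply, h_g, h_bump, Pi.sub_apply]
  · have h := (intervalIntegral_tendsto_integral hg_int tendsto_neg_atTop_atBot tendsto_id).sub
      (intervalIntegral_tendsto_integral hbump tendsto_neg_atTop_atBot tendsto_id)
    rw [integral_indicator_Ioc_div _ hL, sub_self] at h
    exact h.congr fun R => (intervalIntegral.integral_sub hg_int.intervalIntegrable
      hbump.intervalIntegrable).symm

lemma toLp_mem_closure_friedrichsDomA {g : ℝ → ℂ} (hg : MemLp g 2 volume)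
    (hg_int : Integrable g) (hxg : MemLp (fun x : ℝ => (x : ℂ) * g x) 2 volume) :
    hg.toLp g ∈ closure FriedrichsDomA := by
  have h := (tendsto_const_nhds (x := hg.toLp g)).sub (tendsto_spreadMass (∫ x, g x))
  rw [sub_zero] at h
  exact mem_closure_of_tendsto h <| (eventually_gt_atTop 0).mono fun L hL =>
    toLp_sub_spreadMass_mem_friedrichsDomA hg hg_int hxg hL

lemma dense_friedrichsDomA : Dense FriedrichsDomA := by
  intro f
  rw [← closure_closure, Metric.mem_closure_iff]
  intro ε hε
  obtain ⟨g, hg_supp, hfg, hg_cont, hg⟩ := (Lp.memLp f).exists_hasCompactSupport_eLpNorm_sub_le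
    ENNReal.ofNat_ne_top (ε := ENNReal.ofReal (ε / 2)) (ENNReal.ofReal_pos.2 (half_pos hε)).ne'
  refine ⟨hg.toLp g, toLp_mem_closure_friedrichsDomA hg
    (hg_cont.integrable_of_hasCompactSupport hg_supp)
    ((Complex.continuous_ofReal.mul hg_cont).memLp_of_hasCompactSupport hg_supp.mul_left), ?_⟩
  calc dist f (hg.toLp g) = (eLpNorm (⇑f - g) 2 volume).toReal := by
        rw [dist_edist, ← Lp.edist_toLp_toLp _ _ (Lp.memLp f) hg, Lp.toLp_coeFn]
    _ ≤ ε / 2 := ENNReal.toReal_le_of_le_ofReal (by positivity) hfg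
    _ < ε := half_lt_self hε

theorem stmt11 :
    (0 : Lp ℂ 2 (volume : Measure ℝ)) ∈ FriedrichsDomA ∧
    (∀ f ∈ FriedrichsDomA, ∀ g ∈ FriedrichsDomA, f + g ∈ FriedrichsDomA) ∧
    (∀ (c : ℂ), ∀ f ∈ FriedrichsDomA, c • f ∈ FriedrichsDomA) ∧
    Dense FriedrichsDomA :=
  ⟨zero_mem_friedrichsDomA, fun _ hf _ hg => add_mem_friedrichsDomA hf hg,
    fun c _ hf => smul_mem_friedrichsDomA c hf, dense_friedrichsDomA⟩
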